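/- arXiv:1511.04519 — 3 statements merged into one kernel-verified Lean document; each statement's English description precedes it below -/
import Mathlib

section
/- If h̃_{m+1,m} = 0 in the shift-and-invert Arnoldi process (invariant subspace), then for all h ≥ 0, e^{hA} v = ‖v‖ V_m e^{h H_m} e₁ where H_m = (I − H̃_m⁻¹)/γ. -/
/-!
The Arnoldi relation `(I - γA)⁻¹ V = V H̃` rearranges to `A V = V H` with `H = (I - H̃⁻¹)/γ`,
so `V` intertwines `A` and `H`. The intertwining passes to all powers, hence term by term to the
exponential series: `e^{hA} V = V e^{hH}`. Applying this to `‖v‖ e₁` gives the claim.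
-/

open Matrix NormedSpace

namespace Matrix

variable {l m : Type*} [Fintype l] [Fintype m] [DecidableEq l] [DecidableEq m]

theorem pow_mul_eq_mul_pow_of_mul_eq {α : Type*} [Semiring α]
    {A : Matrix l l α} {B : Matrix m m α} {V : Matrix l m α} (h : A * V = V * B) (k : ℕ) :
    A ^ k * V = V * B ^ k := by
  induction k with
  | zero => simp
  | succ k ih =>
    rw [pow_succ, pow_succ, Matrix.mul_assoc, h, ← Matrix.mul_assoc, ih, Matrix.mul_assoc]

open scoped Norms.Operator in
theorem exp_mul_eq_mul_exp_of_mul_eq {𝕂 : Type*} [RCLike 𝕂]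
    {A : Matrix l l 𝕂} {B : Matrix m m 𝕂} {V : Matrix l m 𝕂} (h : A * V = V * B) :
    exp A * V = V * exp B := by
  have hA := (exp_series_hasSum_exp' (𝕂 := 𝕂) A).map (addMonoidHomMulRight V)
    (continuous_id.matrix_mul continuous_const)
  have hB := (exp_series_hasSum_exp' (𝕂 := 𝕂) B).map (addMonoidHomMulLeft V)
    (continuous_const.matrix_mul continuous_id)
  refine hA.unique (hB.congr_fun fun k => ?_)
  simp [Matrix.smul_mul, Matrix.mul_smul, pow_mul_eq_mul_pow_of_mul_eq h]

theorem mul_eq_mul_of_inv_one_sub_smul_mul_eq {K : Type*} [Field K]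
    {A : Matrix l l K} {V : Matrix l m K} {Ht : Matrix m m K} {γ : K} (hγ : γ ≠ 0)
    (hA : IsUnit (1 - γ • A).det) (hHt : IsUnit Ht.det) (h : (1 - γ • A)⁻¹ * V = V * Ht) :
    A * V = V * (γ⁻¹ • (1 - Ht⁻¹)) := by
  have hV : V * Ht⁻¹ = (1 - γ • A) * V :=
    calc V * Ht⁻¹ = (1 - γ • A) * ((1 - γ • A)⁻¹ * V) * Ht⁻¹ := by
          rw [mul_nonsing_inv_cancel_left _ _ hA]
      _ = (1 - γ • A) * V := by rw [h, ← Matrix.mul_assoc, mul_nonsing_inv_cancel_right _ _ hHt]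
  rw [Matrix.mul_smul, Matrix.mul_sub, Matrix.mul_one, hV, Matrix.sub_mul, Matrix.one_mul,
    Matrix.smul_mul, sub_sub_cancel, smul_smul, inv_mul_cancel₀ hγ, one_smul]

end Matrix

theorem stmt9_general {n m : ℕ} (hm : 0 < m)
    (A : Matrix (Fin n) (Fin n) ℝ) (γ : ℝ) (hγ : 0 < γ)
    (hinv : IsUnit (1 - γ • A).det)
    (V : Matrix (Fin n) (Fin m) ℝ) (Ht : Matrix (Fin m) (Fin m) ℝ)
    (hHt : IsUnit Ht.det)
    (v : Fin n → ℝ)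
    (harnoldi : (1 - γ • A)⁻¹ * V = V * Ht)
    (hv1 : v = ‖v‖ • V.mulVec (Pi.single ⟨0, hm⟩ 1)) :
    ∀ h : ℝ, 0 ≤ h →
      (exp (h • A)).mulVec v =
        ‖v‖ • V.mulVec
          ((exp (h • (γ⁻¹ • (1 - Ht⁻¹)))).mulVec (Pi.single ⟨0, hm⟩ 1)) := by
  intro h _
  have hAV := mul_eq_mul_of_inv_one_sub_smul_mul_eq hγ.ne' hinv hHt harnoldi
  have hexp : exp (h • A) * V = V * exp (h • (γ⁻¹ • (1 - Ht⁻¹))) :=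
    exp_mul_eq_mul_exp_of_mul_eq (by rw [Matrix.smul_mul, Matrix.mul_smul, hAV])
  nth_rw 1 [hv1]
  rw [mulVec_smul, mulVec_mulVec, hexp, ← mulVec_mulVec]

/-- Exactness of the shift-and-invert (rational) Krylov approximation at an
invariant subspace: if `(I - γA)⁻¹ V_m = V_m H̃_m` (i.e. `h̃_{m+1,m} = 0`),
`V_m` has orthonormal columns, `v = ‖v‖ V_m e₁` and `H̃_m` is invertible, then
for all `h ≥ 0`, `e^{hA} v = ‖v‖ V_m e^{h H_m} e₁` with `H_m = (I - H̃_m⁻¹)/γ`. -/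
theorem stmt9 {n m : ℕ} (hm : 0 < m)
    (A : Matrix (Fin n) (Fin n) ℝ) (γ : ℝ) (hγ : 0 < γ)
    (hinv : IsUnit (1 - γ • A).det)
    (V : Matrix (Fin n) (Fin m) ℝ) (Ht : Matrix (Fin m) (Fin m) ℝ)
    (hHt : IsUnit Ht.det)
    (v : Fin n → ℝ) (hv : v ≠ 0)
    (horth : Vᵀ * V = 1)
    (harnoldi : (1 - γ • A)⁻¹ * V = V * Ht)
    (hv1 : v = ‖v‖ • V.mulVec (Pi.single ⟨0, hm⟩ 1)) :
    ∀ h : ℝ, 0 ≤ h →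
      (exp (h • A)).mulVec v =
        ‖v‖ • V.mulVec
          ((exp (h • (γ⁻¹ • (1 - Ht⁻¹)))).mulVec (Pi.single ⟨0, hm⟩ 1)) :=
  stmt9_general hm A γ hγ hinv V Ht hHt v harnoldi hv1
end

section
/- If h'_{m+1,m} = 0 in the inverted Arnoldi process applied to A⁻¹ (invariant subspace) and H'_m is invertible, then e^{hA} v = ‖v‖ V_m e^{h (H'_m)⁻¹} e₁ for all h. -/
/-! Multiplying `A⁻¹ V = V H'` by `A` on the left and by `H'⁻¹` on the right gives
`A V = V H'⁻¹`, so `V` intertwines every power of `h A` with the same power of `h H'⁻¹`, and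
hence, term by term in the exponential series, `e^{hA} V = V e^{h H'⁻¹}`. Applying this to
`‖v‖ e₁` gives the claim. -/

open Matrix NormedSpace

namespace Matrix

-- `exp` does not depend on a norm; one is chosen only to sum the exponential series.
attribute [local instance] Matrix.linftyOpNormedAddCommGroup Matrix.linftyOpNormedRing
  Matrix.linftyOpNormedAlgebra

variable {𝕂 : Type*} [RCLike 𝕂] {l m : Type*} [Fintype l] [DecidableEq l] [Fintype m] [DecidableEq m]

theorem pow_mul_eq_mul_pow_of_mul_eq_mul {R : Type*} [Semiring R] {A : Matrix l l R}
    {B : Matrix m m R} {V : Matrix l m R} (h : A * V = V * B) (k : ℕ) :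
    A ^ k * V = V * B ^ k := by
  induction k with
  | zero => simp
  | succ k ih => rw [pow_succ', pow_succ', Matrix.mul_assoc, ih, ← Matrix.mul_assoc, h,
      Matrix.mul_assoc]

theorem exp_mul_eq_mul_exp_of_mul_eq_mul {A : Matrix l l 𝕂} {B : Matrix m m 𝕂}
    {V : Matrix l m 𝕂} (h : A * V = V * B) : exp A * V = V * exp B := by
  have hA := (exp_series_hasSum_exp' (𝕂 := 𝕂) A).map (addMonoidHomMulRight V)
    (continuous_id.matrix_mul continuous_const)
  have hB := (exp_series_hasSum_exp' (𝕂 := 𝕂) B).map (addMonoidHomMulLeft V)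
    (continuous_const.matrix_mul continuous_id)
  refine hA.unique (hB.congr_fun fun k => ?_)
  simp only [Function.comp_apply, addMonoidHomMulRight_apply, addMonoidHomMulLeft_apply,
    Matrix.smul_mul, Matrix.mul_smul, pow_mul_eq_mul_pow_of_mul_eq_mul h]

theorem mul_eq_mul_inv_of_inv_mul_eq_mul {R : Type*} [CommRing R] {A : Matrix l l R}
    {H : Matrix m m R} {V : Matrix l m R} (hA : IsUnit A.det) (hH : IsUnit H.det)
    (h : A⁻¹ * V = V * H) : A * V = V * H⁻¹ := by
  have hV : V = A * V * H := by
    rw [Matrix.mul_assoc, ← h, ← Matrix.mul_assoc, mul_nonsing_inv A hA, Matrix.one_mul]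
  conv_rhs => rw [hV, Matrix.mul_assoc (A * V), mul_nonsing_inv H hH, Matrix.mul_one]

end Matrix

theorem stmt10_general {n m : ℕ} (hm : 0 < m)
    (A : Matrix (Fin n) (Fin n) ℝ) (hA : IsUnit A.det)
    (V : Matrix (Fin n) (Fin m) ℝ) (H' : Matrix (Fin m) (Fin m) ℝ)
    (hH' : IsUnit H'.det)
    (v : Fin n → ℝ)
    (harnoldi : A⁻¹ * V = V * H')
    (hv1 : v = ‖v‖ • V.mulVec (Pi.single ⟨0, hm⟩ 1)) :
    ∀ h : ℝ,
      (exp (h • A)).mulVec v =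
        ‖v‖ • V.mulVec ((exp (h • H'⁻¹)).mulVec (Pi.single ⟨0, hm⟩ 1)) := by
  intro h
  have hAV : (h • A) * V = V * (h • H'⁻¹) := by
    rw [Matrix.smul_mul, Matrix.mul_smul, mul_eq_mul_inv_of_inv_mul_eq_mul hA hH' harnoldi]
  conv_lhs => rw [hv1]
  rw [mulVec_smul, mulVec_mulVec, exp_mul_eq_mul_exp_of_mul_eq_mul hAV, ← mulVec_mulVec]

/-- Exactness of the inverted Krylov approximation at an invariant subspace:
if `A⁻¹ V_m = V_m H'_m` (i.e. `h'_{m+1,m} = 0`) with `A` and `H'_m` invertible,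
`V_m` with orthonormal columns and `v = ‖v‖ V_m e₁`, then
`e^{hA} v = ‖v‖ V_m e^{h (H'_m)⁻¹} e₁` for all `h`. -/
theorem stmt10 {n m : ℕ} (hm : 0 < m)
    (A : Matrix (Fin n) (Fin n) ℝ) (hA : IsUnit A.det)
    (V : Matrix (Fin n) (Fin m) ℝ) (H' : Matrix (Fin m) (Fin m) ℝ)
    (hH' : IsUnit H'.det)
    (v : Fin n → ℝ) (hv : v ≠ 0)
    (horth : Vᵀ * V = 1)
    (harnoldi : A⁻¹ * V = V * H')
    (hv1 : v = ‖v‖ • V.mulVec (Pi.single ⟨0, hm⟩ 1)) :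
    ∀ h : ℝ,
      (exp (h • A)).mulVec v =
        ‖v‖ • V.mulVec ((exp (h • H'⁻¹)).mulVec (Pi.single ⟨0, hm⟩ 1)) :=
  stmt10_general hm A hA V H' hH' v harnoldi hv1
end

section
/- Residual identity for the standard Krylov approximation: defining y_m(h) = ‖v‖ V_m e^{h H_m} e₁, its derivative satisfies y'_m(h) − A y_m(h) = −‖v‖ h_{m+1,m} (e_mᵀ e^{h H_m} e₁) v_{m+1}, so the residual norm equals ‖v‖ · h_{m+1,m} · |e_mᵀ e^{h H_m} e₁|. -/
/-!
Since `d/ds exp (s H) = H exp (s H)`, the derivative of `y(s) = ‖v‖ V exp (s H) e₁` is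
`‖v‖ V H exp (s H) e₁`, and the Arnoldi relation `A V = V H + h w e_mᵀ` turns `V H u` into
`A V u - h (e_mᵀ u) w`. The residual is therefore a multiple of the unit vector `w`.
-/

open Matrix NormedSpace

theorem Matrix.mulVec_mulVec_eq_of_mul_eq_add_smul_vecMulVec {R ι κ : Type*} [CommRing R]
    [Fintype ι] [Fintype κ] {A : Matrix κ κ R} {V : Matrix κ ι R} {H : Matrix ι ι R}
    {c : R} {w : κ → R} {f : ι → R} (hAV : A * V = V * H + c • vecMulVec w f) (u : ι → R) :
    A *ᵥ V *ᵥ u = V *ᵥ H *ᵥ u + (c * (f ⬝ᵥ u)) • w := by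
  rw [mulVec_mulVec, hAV, add_mulVec, smul_mulVec, vecMulVec_mulVec, ← mulVec_mulVec,
    op_smul_eq_smul, smul_smul]

section

-- Any submultiplicative norm would do: it only serves to define `exp`, and its topology is
-- the product topology in which the derivative is stated.
attribute [local instance] Matrix.linftyOpNormedRing Matrix.linftyOpNormedAlgebra

theorem Matrix.hasDerivAt_mulVec_exp_smul_mulVec {𝕂 ι κ : Type*} [RCLike 𝕂] [Fintype ι]
    [DecidableEq ι] [Fintype κ] (V : Matrix κ ι 𝕂) (H : Matrix ι ι 𝕂) (x : ι → 𝕂) (t : 𝕂) :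
    HasDerivAt (fun s : 𝕂 => V *ᵥ exp (s • H) *ᵥ x) (V *ᵥ (H * exp (t • H)) *ᵥ x) t := by
  let L : Matrix ι ι 𝕂 →L[𝕂] κ → 𝕂 := LinearMap.toContinuousLinearMap
    (V.mulVecLin ∘ₗ LinearMap.applyₗ x ∘ₗ (toLin' : Matrix ι ι 𝕂 ≃ₗ[𝕂] _).toLinearMap)
  exact L.hasFDerivAt.comp_hasDerivAt t (hasDerivAt_exp_smul_const' H t)

end

theorem stmt14_general {n m : ℕ} (hm : 0 < m)
    (A : Matrix (Fin n) (Fin n) ℝ)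
    (V : Matrix (Fin n) (Fin m) ℝ) (H : Matrix (Fin m) (Fin m) ℝ)
    (h1 : ℝ) (hh1 : 0 ≤ h1) (w : Fin n → ℝ) (hwnorm : ‖w‖ = 1)
    (v : Fin n → ℝ)
    (harnoldi : A * V = V * H +
      h1 • vecMulVec w (fun j : Fin m => if (j : ℕ) = m - 1 then 1 else 0)) :
    ∀ h : ℝ,
      HasDerivAt
        (fun s : ℝ => ‖v‖ • V.mulVec ((exp (s • H)).mulVec (Pi.single ⟨0, hm⟩ 1)))
        (A.mulVec (‖v‖ • V.mulVec ((exp (h • H)).mulVec (Pi.single ⟨0, hm⟩ 1))) -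
          (‖v‖ * h1 *
            ((fun j : Fin m => if (j : ℕ) = m - 1 then (1:ℝ) else 0) ⬝ᵥ
              (exp (h • H)).mulVec (Pi.single ⟨0, hm⟩ 1))) • w) h ∧
      ‖(‖v‖ * h1 *
          ((fun j : Fin m => if (j : ℕ) = m - 1 then (1:ℝ) else 0) ⬝ᵥ
            (exp (h • H)).mulVec (Pi.single ⟨0, hm⟩ 1))) • w‖ =
        ‖v‖ * h1 *
          |(fun j : Fin m => if (j : ℕ) = m - 1 then (1:ℝ) else 0) ⬝ᵥ
            (exp (h • H)).mulVec (Pi.single ⟨0, hm⟩ 1)| := by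
  intro h
  set e₁ : Fin m → ℝ := Pi.single ⟨0, hm⟩ 1
  set eₘ : Fin m → ℝ := fun j => if (j : ℕ) = m - 1 then 1 else 0
  set u := exp (h • H) *ᵥ e₁
  refine ⟨?_, ?_⟩
  · have hVHu : V *ᵥ (H * exp (h • H)) *ᵥ e₁ = A *ᵥ V *ᵥ u - (h1 * (eₘ ⬝ᵥ u)) • w := by
      rw [← mulVec_mulVec, mulVec_mulVec_eq_of_mul_eq_add_smul_vecMulVec harnoldi,
        add_sub_cancel_right]
    refine ((hasDerivAt_mulVec_exp_smul_mulVec V H e₁ h).const_smul ‖v‖).congr_deriv ?_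
    rw [hVHu, smul_sub, mulVec_smul, smul_smul, mul_assoc]
  · rw [norm_smul, hwnorm, mul_one, Real.norm_eq_abs, abs_mul, abs_mul, abs_norm,
      abs_of_nonneg hh1]

/-- Residual identity for the standard Krylov approximation: with
`y_m(h) = ‖v‖ V_m e^{h H_m} e₁` one has
`y'_m(h) - A y_m(h) = -‖v‖ h_{m+1,m} (e_mᵀ e^{h H_m} e₁) v_{m+1}`,
so the residual norm equals `‖v‖ h_{m+1,m} |e_mᵀ e^{h H_m} e₁|`. -/
theorem stmt14 {n m : ℕ} (hm : 0 < m)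
    (A : Matrix (Fin n) (Fin n) ℝ)
    (V : Matrix (Fin n) (Fin m) ℝ) (H : Matrix (Fin m) (Fin m) ℝ)
    (h1 : ℝ) (hh1 : 0 ≤ h1) (w : Fin n → ℝ) (hwnorm : ‖w‖ = 1)
    (v : Fin n → ℝ) (hv : v ≠ 0)
    (horth : Vᵀ * V = 1)
    (harnoldi : A * V = V * H +
      h1 • vecMulVec w (fun j : Fin m => if (j : ℕ) = m - 1 then 1 else 0))
    (hv1 : v = ‖v‖ • V.mulVec (Pi.single ⟨0, hm⟩ 1)) :
    ∀ h : ℝ,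
      HasDerivAt
        (fun s : ℝ => ‖v‖ • V.mulVec ((exp (s • H)).mulVec (Pi.single ⟨0, hm⟩ 1)))
        (A.mulVec (‖v‖ • V.mulVec ((exp (h • H)).mulVec (Pi.single ⟨0, hm⟩ 1))) -
          (‖v‖ * h1 *
            ((fun j : Fin m => if (j : ℕ) = m - 1 then (1:ℝ) else 0) ⬝ᵥ
              (exp (h • H)).mulVec (Pi.single ⟨0, hm⟩ 1))) • w) h ∧
      ‖(‖v‖ * h1 *
          ((fun j : Fin m => if (j : ℕ) = m - 1 then (1:ℝ) else 0) ⬝ᵥ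
            (exp (h • H)).mulVec (Pi.single ⟨0, hm⟩ 1))) • w‖ =
        ‖v‖ * h1 *
          |(fun j : Fin m => if (j : ℕ) = m - 1 then (1:ℝ) else 0) ⬝ᵥ
            (exp (h • H)).mulVec (Pi.single ⟨0, hm⟩ 1)| :=
  stmt14_general hm A V H h1 hh1 w hwnorm v harnoldi
end
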